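/- There exist constants c₂ > c₁ > 0 such that for all sufficiently large integers ℓ, the sum S̃_ℓ = Σ over positive integers a,b,c with a+b+c=ℓ of [(3/4)/((a+b)²(b+c)²) + (3/2)/((a+b)(b+c)(a+c)²)] satisfies c₁·(log ℓ)/ℓ² ≤ S̃_ℓ ≤ c₂·(log ℓ)/ℓ². -/

import Mathlib

/-- The top-cell contribution `S̃_ℓ` to the discrete integral of `(B^comb_{1,1})²`:
the sum over positive integers `a,b,c` with `a+b+c = ℓ` of
`(3/4)/((a+b)²(b+c)²) + (3/2)/((a+b)(b+c)(a+c)²)`. -/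
noncomputable def Stilde (l : ℕ) : ℝ :=
  ∑ x ∈ (Finset.Icc 1 l ×ˢ Finset.Icc 1 l ×ˢ Finset.Icc 1 l).filter
      (fun x : ℕ × ℕ × ℕ => x.1 + x.2.1 + x.2.2 = l),
    (((3 : ℝ)/4) / (((x.1 + x.2.1 : ℕ) : ℝ) ^ 2 * ((x.2.1 + x.2.2 : ℕ) : ℝ) ^ 2)
      + ((3 : ℝ)/2) / (((x.1 + x.2.1 : ℕ) : ℝ) * ((x.2.1 + x.2.2 : ℕ) : ℝ)
          * ((x.1 + x.2.2 : ℕ) : ℝ) ^ 2))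

/-!
Write `p = a + b`, `q = b + c`, `r = a + c`; any two of them add up to at least `ℓ`. Clearing
denominators (and AM-GM for the second term) bounds the summand above by
`(9/2) ℓ⁻² (p⁻² + q⁻² + r⁻²)`, and `q ≤ ℓ` bounds it below by `(3/4) ℓ⁻² p⁻²`. By the symmetry
of the simplex, both bounds reduce to `∑_{a+b+c=ℓ} (a+b)⁻² = ∑_{m<ℓ} (m-1)/m²`, which is the
harmonic number `H_{ℓ-1}` up to at most `∑ 1/m² ≤ 2`, hence `log ℓ + O(1)`.
-/

open Finset

def simplex (l : ℕ) : Finset (ℕ × ℕ × ℕ) :=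
  (Icc 1 l ×ˢ Icc 1 l ×ˢ Icc 1 l).filter (fun x => x.1 + x.2.1 + x.2.2 = l)

lemma mem_simplex {l : ℕ} {x : ℕ × ℕ × ℕ} :
    x ∈ simplex l ↔ 0 < x.1 ∧ 0 < x.2.1 ∧ 0 < x.2.2 ∧ x.1 + x.2.1 + x.2.2 = l := by
  simp only [simplex, mem_filter, mem_product, mem_Icc]
  omega

section

variable {M : Type*} [AddCommMonoid M] (f : ℕ → M) (l : ℕ)

lemma sum_simplex_fst_add_snd :
    ∑ x ∈ simplex l, f (x.1 + x.2.1) = ∑ i ∈ range (l - 1), i • f (i + 1) := by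
  calc ∑ x ∈ simplex l, f (x.1 + x.2.1)
      = ∑ y ∈ (range (l - 1)).sigma range, f (y.1 + 1) := by
        refine sum_nbij' (fun x => ⟨x.1 + x.2.1 - 1, x.1 - 1⟩)
          (fun y => (y.2 + 1, y.1 - y.2, l - 1 - y.1)) ?_ ?_ ?_ ?_ ?_ <;>
        · simp only [mem_sigma, mem_range, mem_simplex, Sigma.forall, Prod.forall, Sigma.mk.injEq,
            heq_eq_eq, Prod.mk.injEq]
          intros; first | omega | (congr 1; omega)
    _ = ∑ i ∈ range (l - 1), i • f (i + 1) := by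
        rw [sum_sigma]
        simp

lemma sum_simplex_snd_add_thd :
    ∑ x ∈ simplex l, f (x.2.1 + x.2.2) = ∑ x ∈ simplex l, f (x.1 + x.2.1) := by
  refine sum_nbij' (fun x => (x.2.2, x.2.1, x.1)) (fun x => (x.2.2, x.2.1, x.1))
    ?_ ?_ ?_ ?_ ?_ <;>
  simp +contextual [mem_simplex, add_comm] <;> omega

lemma sum_simplex_fst_add_thd :
    ∑ x ∈ simplex l, f (x.1 + x.2.2) = ∑ x ∈ simplex l, f (x.1 + x.2.1) := by
  refine sum_nbij' (fun x => (x.1, x.2.2, x.2.1)) (fun x => (x.1, x.2.2, x.2.1))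
    ?_ ?_ ?_ ?_ ?_ <;>
  simp +contextual [mem_simplex] <;> omega

end

lemma cast_harmonic_eq_sum_range (n : ℕ) :
    (harmonic n : ℝ) = ∑ i ∈ range n, 1 / ((i : ℝ) + 1) := by
  simp [harmonic]

lemma sum_range_inv_succ_sq_le_two (n : ℕ) : ∑ i ∈ range n, 1 / ((i : ℝ) + 1) ^ 2 ≤ 2 := by
  have h := sum_Ioo_inv_sq_le (α := ℝ) 0 (n + 1)
  rw [← Ico_succ_left_eq_Ioo, sum_Ico_eq_sum_range] at h
  simpa [add_comm] using h

lemma sum_range_div_succ_sq_le_one_add_log (n : ℕ) :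
    ∑ i ∈ range n, (i : ℝ) / ((i : ℝ) + 1) ^ 2 ≤ 1 + Real.log n := by
  calc ∑ i ∈ range n, (i : ℝ) / ((i : ℝ) + 1) ^ 2 ≤ ∑ i ∈ range n, 1 / ((i : ℝ) + 1) := by
        refine sum_le_sum fun i _ => ?_
        rw [div_le_div_iff₀ (by positivity) (by positivity)]
        nlinarith
    _ ≤ 1 + Real.log n := cast_harmonic_eq_sum_range n ▸ harmonic_le_one_add_log n

lemma log_succ_sub_two_le_sum_range_div_succ_sq (n : ℕ) :
    Real.log (n + 1) - 2 ≤ ∑ i ∈ range n, (i : ℝ) / ((i : ℝ) + 1) ^ 2 := by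
  have hsplit : ∑ i ∈ range n, (i : ℝ) / ((i : ℝ) + 1) ^ 2
      = ∑ i ∈ range n, 1 / ((i : ℝ) + 1) - ∑ i ∈ range n, 1 / ((i : ℝ) + 1) ^ 2 := by
    rw [← sum_sub_distrib]
    refine sum_congr rfl fun i _ => ?_
    field_simp
    ring
  have hlog : Real.log (n + 1) ≤ ∑ i ∈ range n, 1 / ((i : ℝ) + 1) := by
    simpa [cast_harmonic_eq_sum_range] using log_add_one_le_harmonic n
  linarith [sum_range_inv_succ_sq_le_two n]

lemma sum_simplex_inv_sq (l : ℕ) :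
    ∑ x ∈ simplex l, 1 / ((x.1 + x.2.1 : ℕ) : ℝ) ^ 2
      = ∑ i ∈ range (l - 1), (i : ℝ) / ((i : ℝ) + 1) ^ 2 := by
  rw [sum_simplex_fst_add_snd (fun m => 1 / (m : ℝ) ^ 2)]
  refine sum_congr rfl fun i _ => ?_
  simp [div_eq_mul_inv]

lemma inv_sq_mul_sq_le {p q L : ℝ} (hp : 0 < p) (hq : 0 < q) (hL : 0 < L) (h : L ≤ p + q) :
    1 / (p ^ 2 * q ^ 2) ≤ 2 / L ^ 2 * (1 / p ^ 2 + 1 / q ^ 2) := by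
  have key : 1 / (p ^ 2 + q ^ 2) ≤ 2 / L ^ 2 := by
    rw [div_le_div_iff₀ (by positivity) (by positivity)]
    nlinarith [sq_nonneg (p - q)]
  calc 1 / (p ^ 2 * q ^ 2) = 1 / (p ^ 2 + q ^ 2) * (1 / p ^ 2 + 1 / q ^ 2) := by
        field_simp; ring
    _ ≤ _ := by gcongr

lemma inv_mul_mul_sq_le {p q r L : ℝ} (hp : 0 < p) (hq : 0 < q) (hr : 0 < r) (hL : 0 < L)
    (hpr : L ≤ p + r) (hqr : L ≤ q + r) :
    1 / (p * q * r ^ 2) ≤ 2 / L ^ 2 * (1 / p ^ 2 + 1 / q ^ 2 + 1 / r ^ 2) := by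
  have key : p * q / (q ^ 2 * r ^ 2 + p ^ 2 * r ^ 2 + p ^ 2 * q ^ 2) ≤ 2 / L ^ 2 := by
    rw [div_le_div_iff₀ (by positivity) (by positivity)]
    have hL2 : p * q * L ^ 2 ≤ p * q * ((p + r) * (q + r)) :=
      mul_le_mul_of_nonneg_left (by nlinarith) (mul_pos hp hq).le
    nlinarith [sq_nonneg (p * q - p * r), sq_nonneg (p * q - q * r), sq_nonneg (p * r - q * r)]
  calc 1 / (p * q * r ^ 2)
      = p * q / (q ^ 2 * r ^ 2 + p ^ 2 * r ^ 2 + p ^ 2 * q ^ 2)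
        * (1 / p ^ 2 + 1 / q ^ 2 + 1 / r ^ 2) := by
        field_simp
    _ ≤ _ := by gcongr

noncomputable def stildeSummand (p q r : ℝ) : ℝ :=
  3 / 4 / (p ^ 2 * q ^ 2) + 3 / 2 / (p * q * r ^ 2)

lemma stildeSummand_le {p q r L : ℝ} (hp : 0 < p) (hq : 0 < q) (hr : 0 < r) (hL : 0 < L)
    (hpq : L ≤ p + q) (hpr : L ≤ p + r) (hqr : L ≤ q + r) :
    stildeSummand p q r ≤ 9 / 2 / L ^ 2 * (1 / p ^ 2 + 1 / q ^ 2 + 1 / r ^ 2) := by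
  have hr' : 0 ≤ 3 / 2 / L ^ 2 * (1 / r ^ 2) := by positivity
  calc stildeSummand p q r
      = 3 / 4 * (1 / (p ^ 2 * q ^ 2)) + 3 / 2 * (1 / (p * q * r ^ 2)) := by
        simp only [stildeSummand]; ring
    _ ≤ 3 / 4 * (2 / L ^ 2 * (1 / p ^ 2 + 1 / q ^ 2))
        + 3 / 2 * (2 / L ^ 2 * (1 / p ^ 2 + 1 / q ^ 2 + 1 / r ^ 2)) := by
        gcongr
        exacts [inv_sq_mul_sq_le hp hq hL hpq, inv_mul_mul_sq_le hp hq hr hL hpr hqr]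
    _ = 9 / 2 / L ^ 2 * (1 / p ^ 2 + 1 / q ^ 2 + 1 / r ^ 2) - 3 / 2 / L ^ 2 * (1 / r ^ 2) := by
        ring
    _ ≤ _ := by linarith

lemma div_sq_le_stildeSummand {p q r L : ℝ} (hp : 0 < p) (hq : 0 < q) (hr : 0 < r)
    (hqL : q ≤ L) : 3 / 4 / L ^ 2 * (1 / p ^ 2) ≤ stildeSummand p q r := by
  calc 3 / 4 / L ^ 2 * (1 / p ^ 2) = 3 / 4 / (p ^ 2 * L ^ 2) := by ring
    _ ≤ 3 / 4 / (p ^ 2 * q ^ 2) := by gcongr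
    _ ≤ stildeSummand p q r := le_add_of_nonneg_right (by positivity)

lemma Stilde_eq_sum_stildeSummand (l : ℕ) :
    Stilde l = ∑ x ∈ simplex l,
      stildeSummand ((x.1 + x.2.1 : ℕ) : ℝ) ((x.2.1 + x.2.2 : ℕ) : ℝ) ((x.1 + x.2.2 : ℕ) : ℝ) :=
  rfl

lemma Stilde_le_mul_one_add_log (l : ℕ) : Stilde l ≤ 27 / 2 / l ^ 2 * (1 + Real.log l) := by
  have hS : ∑ x ∈ simplex l, 1 / ((x.1 + x.2.1 : ℕ) : ℝ) ^ 2 ≤ 1 + Real.log l := by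
    rw [sum_simplex_inv_sq]
    obtain hl | hl := Nat.lt_or_ge l 2
    · rw [Nat.sub_eq_zero_of_le (by omega), sum_range_zero]
      linarith [Real.log_natCast_nonneg l]
    · refine (sum_range_div_succ_sq_le_one_add_log _).trans ?_
      gcongr
      · exact_mod_cast (by omega : 0 < l - 1)
      · exact_mod_cast Nat.sub_le l 1
  rw [Stilde_eq_sum_stildeSummand]
  calc _ ≤ ∑ x ∈ simplex l, 9 / 2 / (l : ℝ) ^ 2 * (1 / ((x.1 + x.2.1 : ℕ) : ℝ) ^ 2
        + 1 / ((x.2.1 + x.2.2 : ℕ) : ℝ) ^ 2 + 1 / ((x.1 + x.2.2 : ℕ) : ℝ) ^ 2) := by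
        refine sum_le_sum fun x hx => ?_
        have := mem_simplex.1 hx
        apply stildeSummand_le <;> norm_cast <;> omega
    _ = 27 / 2 / (l : ℝ) ^ 2 * ∑ x ∈ simplex l, 1 / ((x.1 + x.2.1 : ℕ) : ℝ) ^ 2 := by
        rw [← mul_sum, sum_add_distrib, sum_add_distrib,
          sum_simplex_snd_add_thd (fun m => 1 / (m : ℝ) ^ 2),
          sum_simplex_fst_add_thd (fun m => 1 / (m : ℝ) ^ 2)]
        ring
    _ ≤ 27 / 2 / l ^ 2 * (1 + Real.log l) := by gcongr

lemma mul_log_sub_two_le_Stilde {l : ℕ} (hl : 0 < l) :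
    3 / 4 / l ^ 2 * (Real.log l - 2) ≤ Stilde l := by
  have hS : Real.log l - 2 ≤ ∑ x ∈ simplex l, 1 / ((x.1 + x.2.1 : ℕ) : ℝ) ^ 2 := by
    rw [sum_simplex_inv_sq]
    simpa [Nat.cast_pred hl] using log_succ_sub_two_le_sum_range_div_succ_sq (l - 1)
  rw [Stilde_eq_sum_stildeSummand]
  calc 3 / 4 / l ^ 2 * (Real.log l - 2)
      ≤ 3 / 4 / l ^ 2 * ∑ x ∈ simplex l, 1 / ((x.1 + x.2.1 : ℕ) : ℝ) ^ 2 := by gcongr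
    _ = ∑ x ∈ simplex l, 3 / 4 / l ^ 2 * (1 / ((x.1 + x.2.1 : ℕ) : ℝ) ^ 2) := mul_sum ..
    _ ≤ _ := by
        refine sum_le_sum fun x hx => ?_
        have := mem_simplex.1 hx
        apply div_sq_le_stildeSummand <;> norm_cast <;> omega

/-- There exist `c₂ > c₁ > 0` such that for all large `ℓ`,
`c₁ log ℓ / ℓ² ≤ S̃_ℓ ≤ c₂ log ℓ / ℓ²`. -/
theorem stmt_15 :
    ∃ c₁ c₂ : ℝ, 0 < c₁ ∧ c₁ < c₂ ∧ ∃ N : ℕ, ∀ l : ℕ, N ≤ l →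
      c₁ * Real.log l / (l : ℝ) ^ 2 ≤ Stilde l
      ∧ Stilde l ≤ c₂ * Real.log l / (l : ℝ) ^ 2 := by
  refine ⟨3 / 8, 27, by norm_num, by norm_num, 81, fun l hl => ?_⟩
  have hlog : 4 ≤ Real.log l := by
    rw [Real.le_log_iff_exp_le (by positivity)]
    calc Real.exp 4 = Real.exp 1 ^ 4 := by rw [← Real.exp_nat_mul]; norm_num
      _ ≤ 3 ^ 4 := by gcongr; exact Real.exp_one_lt_three.le
      _ ≤ l := by exact_mod_cast hl
  constructor
  · calc 3 / 8 * Real.log l / (l : ℝ) ^ 2 = 3 / 4 / l ^ 2 * (Real.log l / 2) := by ring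
      _ ≤ 3 / 4 / l ^ 2 * (Real.log l - 2) := by gcongr; linarith
      _ ≤ Stilde l := mul_log_sub_two_le_Stilde (by omega)
  · calc Stilde l ≤ 27 / 2 / l ^ 2 * (1 + Real.log l) := Stilde_le_mul_one_add_log l
      _ ≤ 27 / 2 / l ^ 2 * (2 * Real.log l) := by gcongr; linarith
      _ = 27 * Real.log l / (l : ℝ) ^ 2 := by ring
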